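/- arXiv:math-ph/0206036 — 5 statements merged into one kernel-verified Lean document; each statement's English description precedes it below -/
import Mathlib

section
/- Let Ψ: G × E → E be a bundle action over an action φ on Q, and let Φ be its canonical lift to π*T*Q given by Φ_g(q,u,p) = (Ψ_g(q,u), T^*_{φ_g(q)}φ_g^{-1}(p)). If every Φ_g is a symmetry of the presymplectic dynamical system (π*T*Q, ω, H) (in particular Φ_g^*H = H), then every fundamental vector field ξ̃ ∈ 𝔛(E) of the action Ψ is an infinitesimal symmetry of the optimal control problem (E, π, Q, X, L); that is, L_{ξ̃}L = 0 and L_{ξ̃}X = 0. -/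
open Filter Topology Metric Set
set_option maxHeartbeats 1000000



/-- The total space `E` of the control bundle `π : E → Q`, in a trivializing chart:
`E = ℝ^m × ℝ^k` with `π = pr₁` (states `q`, controls `u`). -/
abbrev CtrlE (m k : ℕ) := (Fin m → ℝ) × (Fin k → ℝ)

/-- The phase space `M = π*T*Q = E ×_Q T*Q`, with points `((q,u),p)`. -/
abbrev CtrlM (m k : ℕ) := ((Fin m → ℝ) × (Fin k → ℝ)) × (Fin m → ℝ)

/-- The presymplectic form `ω = π₂^*ω₀ = dq^i ∧ dp_i` on `M`. -/
noncomputable def ctrlOmega (m k : ℕ) (v w : CtrlM m k) : ℝ :=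
  ∑ i, (v.1.1 i * w.2 i - w.1.1 i * v.2 i)

/-- The Pontryagin Hamiltonian `H = X̂ − L`, `H(q,u,p) = p_i X^i(q,u) − L(q,u)`. -/
noncomputable def ctrlHam (m k : ℕ) (X : CtrlE m k → (Fin m → ℝ))
    (L : CtrlE m k → ℝ) (x : CtrlM m k) : ℝ :=
  (∑ i, x.2 i * X x.1 i) - L x.1

/-- Confinement: solutions of the ODE starting near `q` stay in the ball for a
uniform time. -/
lemma confine {m : ℕ} (ξ0 : (Fin m → ℝ) → (Fin m → ℝ))
    (ψ : ℝ → (Fin m → ℝ) → (Fin m → ℝ)) (hψ0 : ψ 0 = id)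
    (hode : ∀ q' s, HasDerivAt (fun t => ψ t q') (ξ0 (ψ s q')) s)
    (q : Fin m → ℝ) (δ M T : ℝ) (hδ : 0 < δ) (hT : 0 < T)
    (hM : ∀ x ∈ closedBall q δ, ‖ξ0 x‖ ≤ M)
    (hTM : M * T < δ / 2) :
    ∀ q' ∈ closedBall q (δ / 2), ∀ s ∈ Icc (0:ℝ) T, ψ s q' ∈ closedBall q δ := by
  intro q' hq'
  have hcont : Continuous (fun s => ψ s q') :=
    continuous_iff_continuousAt.2 fun s => (hode q' s).continuousAt
  have hM0 : 0 ≤ M := le_trans (norm_nonneg _) (hM q (mem_closedBall_self hδ.le))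
  set S : Set ℝ := {t ∈ Icc (0:ℝ) T | ∀ s ∈ Icc (0:ℝ) t, ψ s q' ∈ closedBall q δ} with hS
  have hq'δ : q' ∈ closedBall q δ := closedBall_subset_closedBall (by linarith) hq'
  have h0S : (0:ℝ) ∈ S := by
    refine ⟨⟨le_refl _, hT.le⟩, ?_⟩
    intro s hs
    have : s = 0 := le_antisymm hs.2 hs.1
    rw [this, hψ0]; exact hq'δ
  have hSne : S.Nonempty := ⟨0, h0S⟩
  have hSbdd : BddAbove S := ⟨T, fun t ht => ht.1.2⟩
  set τ := sSup S with hτ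
  have hτ0 : 0 ≤ τ := le_csSup hSbdd h0S
  have hτT : τ ≤ T := csSup_le hSne fun t ht => ht.1.2
  -- every `s < τ` with `0 ≤ s` is fine
  have hlt : ∀ s, 0 ≤ s → s < τ → ψ s q' ∈ closedBall q δ := by
    intro s hs0 hsτ
    obtain ⟨t, htS, hst⟩ := exists_lt_of_lt_csSup hSne hsτ
    exact htS.2 s ⟨hs0, hst.le⟩
  -- so is `τ` itself, by continuity
  have hτmem : ψ τ q' ∈ closedBall q δ := by
    rcases eq_or_lt_of_le hτ0 with h | h
    · rw [← h, hψ0]; exact hq'δ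
    · have htend : Tendsto (fun s => ψ s q') (𝓝[<] τ) (𝓝 (ψ τ q')) :=
        (hcont.tendsto τ).mono_left nhdsWithin_le_nhds
      refine isClosed_closedBall.mem_of_tendsto htend ?_
      filter_upwards [Ioo_mem_nhdsLT_of_mem (⟨h, le_refl τ⟩ : τ ∈ Ioc 0 τ)] with s hs
      exact hlt s hs.1.le hs.2
  have hτS : τ ∈ S := by
    refine ⟨⟨hτ0, hτT⟩, fun s hs => ?_⟩
    rcases eq_or_lt_of_le hs.2 with h | h
    · rw [h]; exact hτmem
    · exact hlt s hs.1 h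
  -- show `τ = T`
  rcases eq_or_lt_of_le hτT with hτeT | hτltT
  · intro s hs
    exact hτS.2 s ⟨hs.1, hs.2.trans_eq hτeT.symm⟩
  · exfalso
    -- speed bound on `[0, τ]` gives `ψ τ q'` in the open ball
    have hmv : ‖ψ τ q' - q'‖ ≤ M * τ := by
      have := Convex.norm_image_sub_le_of_norm_hasDerivWithin_le
        (f := fun s => ψ s q') (f' := fun s => ξ0 (ψ s q')) (s := Icc (0:ℝ) τ)
        (fun x hx => (hode q' x).hasDerivWithinAt)
        (fun x hx => hM _ (hτS.2 x hx)) (convex_Icc 0 τ)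
        (left_mem_Icc.2 hτ0) (right_mem_Icc.2 hτ0)
      calc ‖ψ τ q' - q'‖ = ‖ψ τ q' - ψ 0 q'‖ := by rw [hψ0]; rfl
        _ ≤ M * ‖τ - 0‖ := this
        _ = M * τ := by rw [sub_zero, Real.norm_of_nonneg hτ0]
    have hball : ψ τ q' ∈ ball q δ := by
      have h1 : dist (ψ τ q') q ≤ ‖ψ τ q' - q'‖ + dist q' q := by
        rw [dist_eq_norm]
        calc ‖ψ τ q' - q‖ ≤ ‖ψ τ q' - q'‖ + ‖q' - q‖ := norm_sub_le_norm_sub_add_norm_sub _ _ _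
          _ = ‖ψ τ q' - q'‖ + dist q' q := by rw [dist_eq_norm]
      have h2 : M * τ ≤ M * T := by nlinarith
      have h3 : dist q' q ≤ δ / 2 := mem_closedBall.1 hq'
      simp only [mem_ball]
      calc dist (ψ τ q') q ≤ ‖ψ τ q' - q'‖ + dist q' q := h1
        _ ≤ M * τ + δ / 2 := add_le_add hmv h3
        _ ≤ M * T + δ / 2 := by linarith
        _ < δ := by linarith
    -- continuity lets us go a bit further, contradicting `sSup`
    have hev : ∀ᶠ s in 𝓝 τ, ψ s q' ∈ ball q δ :=
      (hcont.tendsto τ).eventually (isOpen_ball.eventually_mem hball)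
    obtain ⟨η, hη, hηmem⟩ := Metric.eventually_nhds_iff.1 hev
    set t' := min T (τ + η / 2) with ht'
    have hτt' : τ < t' := lt_min hτltT (by linarith)
    have ht'S : t' ∈ S := by
      refine ⟨⟨hτ0.trans hτt'.le, min_le_left _ _⟩, fun s hs => ?_⟩
      rcases le_or_gt s τ with h | h
      · exact hτS.2 s ⟨hs.1, h⟩
      · refine ball_subset_closedBall (hηmem ?_)
        have hsle : s ≤ τ + η / 2 := hs.2.trans (min_le_right _ _)
        rw [Real.dist_eq, abs_of_pos (by linarith)]
        linarith
    exact absurd (le_csSup hSbdd ht'S) (not_le.2 hτt')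


/-- Key variational lemma: if `ψ_t` solves the ODE of `ξ0` pointwise, each `ψ_t` is
differentiable, and `t ↦ Dψ_t(q)v` happens to be differentiable at `0` with
derivative `w`, then `w = Dξ0(q) v`. -/
lemma key_var {m : ℕ} (ξ0 : (Fin m → ℝ) → (Fin m → ℝ)) (hξ0 : ContDiff ℝ (⊤ : ℕ∞) ξ0)
    (ψ : ℝ → (Fin m → ℝ) → (Fin m → ℝ)) (hψ0 : ψ 0 = id)
    (hψd : ∀ t, Differentiable ℝ (ψ t))
    (hode : ∀ q' s, HasDerivAt (fun t => ψ t q') (ξ0 (ψ s q')) s)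
    (q v w : Fin m → ℝ)
    (hg : HasDerivAt (fun t => fderiv ℝ (ψ t) q v) w 0) :
    w = fderiv ℝ ξ0 q v := by
  set g : ℝ → (Fin m → ℝ) := fun t => fderiv ℝ (ψ t) q v with hgdef
  set A : (Fin m → ℝ) →L[ℝ] (Fin m → ℝ) := fderiv ℝ ξ0 q with hA
  have hg0 : g 0 = v := by
    simp only [hgdef, hψ0, fderiv_id, ContinuousLinearMap.coe_id', id_eq]
  -- Main limit claim
  have main : Tendsto (fun t => t⁻¹ • (g t - v)) (𝓝[>] (0:ℝ)) (𝓝 (A v)) := by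
    rw [Metric.tendsto_nhds]
    intro ε hε
    -- choose ε₁
    set ε₁ : ℝ := min 1 (ε / (2 * Real.exp 1 * (‖v‖ + 1))) with hε₁def
    have hε₁ : 0 < ε₁ := lt_min one_pos (by positivity)
    -- continuity of the derivative of ξ0 at q
    have hcd : Continuous (fderiv ℝ ξ0) := hξ0.continuous_fderiv (by simp)
    obtain ⟨δ', hδ', hδ'prop⟩ := Metric.continuousAt_iff.1 hcd.continuousAt ε₁ hε₁
    set δ := δ' / 2 with hδdef
    have hδ : 0 < δ := by positivity
    have hDball : ∀ x ∈ closedBall q δ, ‖fderiv ℝ ξ0 x - A‖ ≤ ε₁ := by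
      intro x hx
      have : dist x q < δ' := lt_of_le_of_lt (mem_closedBall.1 hx) (by linarith)
      have := hδ'prop this
      rw [dist_eq_norm] at this
      exact this.le
    set Lc : ℝ := ‖A‖ + ε₁ with hLc
    have hLc0 : 0 < Lc := by positivity
    have hDbd : ∀ x ∈ closedBall q δ, ‖fderiv ℝ ξ0 x‖ ≤ Lc := by
      intro x hx
      calc ‖fderiv ℝ ξ0 x‖ ≤ ‖A‖ + ‖fderiv ℝ ξ0 x - A‖ := norm_le_insert' _ _
        _ ≤ ‖A‖ + ε₁ := by linarith [hDball x hx]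
    have hdiffξ : ∀ x ∈ closedBall q δ, DifferentiableAt ℝ ξ0 x :=
      fun x _ => (hξ0.differentiable (by simp)) x
    -- Lipschitz on the ball
    have hLip : ∀ x ∈ closedBall q δ, ∀ y ∈ closedBall q δ, ‖ξ0 y - ξ0 x‖ ≤ Lc * ‖y - x‖ :=
      fun x hx y hy => Convex.norm_image_sub_le_of_norm_fderiv_le hdiffξ hDbd
        (convex_closedBall q δ) hx hy
    -- second order estimate
    have hTay : ∀ x ∈ closedBall q δ, ∀ y ∈ closedBall q δ,
        ‖ξ0 y - ξ0 x - A (y - x)‖ ≤ ε₁ * ‖y - x‖ := by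
      intro x hx y hy
      have h1 : ∀ z ∈ closedBall q δ, DifferentiableAt ℝ (fun x => ξ0 x - A x) z :=
        fun z hz => (hdiffξ z hz).sub (A.differentiable.differentiableAt)
      have h2 : ∀ z ∈ closedBall q δ, ‖fderiv ℝ (fun x => ξ0 x - A x) z‖ ≤ ε₁ := by
        intro z hz
        rw [fderiv_fun_sub (hdiffξ z hz) (A.differentiable.differentiableAt), A.fderiv]
        exact hDball z hz
      have := Convex.norm_image_sub_le_of_norm_fderiv_le h1 h2 (convex_closedBall q δ) hx hy
      calc ‖ξ0 y - ξ0 x - A (y - x)‖ = ‖(ξ0 y - A y) - (ξ0 x - A x)‖ := by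
            rw [map_sub]; abel_nf
        _ ≤ ε₁ * ‖y - x‖ := this
    -- sup of ‖ξ0‖ on the ball
    set M : ℝ := ‖ξ0 q‖ + Lc * δ with hM
    have hMbd : ∀ x ∈ closedBall q δ, ‖ξ0 x‖ ≤ M := by
      intro x hx
      have h1 : ‖ξ0 x - ξ0 q‖ ≤ Lc * ‖x - q‖ := hLip q (mem_closedBall_self hδ.le) x hx
      have h2 : ‖x - q‖ ≤ δ := by rw [← dist_eq_norm]; exact mem_closedBall.1 hx
      calc ‖ξ0 x‖ ≤ ‖ξ0 q‖ + ‖ξ0 x - ξ0 q‖ := by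
            nth_rewrite 1 [show ξ0 x = ξ0 q + (ξ0 x - ξ0 q) by abel]
            exact norm_add_le _ _
        _ ≤ ‖ξ0 q‖ + Lc * δ := by nlinarith
    have hM0 : 0 ≤ M := le_trans (norm_nonneg _) (hMbd q (mem_closedBall_self hδ.le))
    -- choose T
    set T : ℝ := min (δ / (2 * (M + 1)) / 2) (min 1 (1 / (Lc + 1))) with hT
    have hT0 : 0 < T := by
      refine lt_min (by positivity) (lt_min one_pos (by positivity))
    have hTM : M * T < δ / 2 := by
      have h1 : T ≤ δ / (4 * (M + 1)) := by
        refine le_trans (min_le_left _ _) (le_of_eq ?_)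
        rw [div_div]; ring_nf
      have h2 : T * (4 * (M + 1)) ≤ δ :=
        (le_div_iff₀ (by positivity : (0:ℝ) < 4 * (M + 1))).1 h1
      nlinarith [hT0, hM0, hδ]
    -- confinement
    have hconf := confine ξ0 ψ hψ0 hode q δ M T hδ hT0 hMbd hTM
    set C₁ : ℝ := ‖v‖ * Real.exp 1 with hC₁
    have hC₁0 : 0 ≤ C₁ := by positivity
    have hLT : Lc * T ≤ 1 := by
      have h1 : T ≤ 1 / (Lc + 1) := le_trans (min_le_right _ _) (min_le_right _ _)
      have h2 : T * (Lc + 1) ≤ 1 := (le_div_iff₀ (by positivity)).1 h1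
      nlinarith
    set B : ℝ → ℝ := fun t => ε₁ * C₁ + ‖A‖ * (Lc * C₁) * t with hB
    -- MAIN estimate
    have MAIN : ∀ t ∈ Ioc (0:ℝ) T, ‖g t - v - t • (A v)‖ ≤ t * B t := by
      intro t ht
      set h₀ : ℝ := (δ / 2) / (‖v‖ + 1) with hh₀
      have hh₀0 : 0 < h₀ := by positivity
      have EST : ∀ h ∈ Ioc (0:ℝ) h₀,
          ‖h⁻¹ • (ψ t (q + h • v) - ψ t q) - v - t • (A v)‖ ≤ t * B t := by
        intro h hh
        have hh0 : 0 < h := hh.1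
        have hq1 : q + h • v ∈ closedBall q (δ / 2) := by
          rw [mem_closedBall, dist_eq_norm, add_sub_cancel_left, norm_smul,
            Real.norm_of_nonneg hh0.le]
          have h1 : h * ‖v‖ ≤ h₀ * (‖v‖ + 1) := by nlinarith [hh.2, norm_nonneg v]
          have h2 : h₀ * (‖v‖ + 1) = δ / 2 := by
            rw [hh₀]; field_simp
          linarith
        have hq2 : q ∈ closedBall q (δ / 2) := mem_closedBall_self (by positivity)
        set F : ℝ → (Fin m → ℝ) := fun s => ψ s (q + h • v) - ψ s q with hF
        set F' : ℝ → (Fin m → ℝ) := fun s => ξ0 (ψ s (q + h • v)) - ξ0 (ψ s q) with hF'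
        have hFd : ∀ s, HasDerivAt F (F' s) s := fun s => (hode _ s).sub (hode _ s)
        have hIcc : Icc (0:ℝ) t ⊆ Icc (0:ℝ) T := Icc_subset_Icc le_rfl ht.2
        have hin1 : ∀ s ∈ Icc (0:ℝ) t, ψ s (q + h • v) ∈ closedBall q δ :=
          fun s hs => hconf _ hq1 s (hIcc hs)
        have hin2 : ∀ s ∈ Icc (0:ℝ) t, ψ s q ∈ closedBall q δ :=
          fun s hs => hconf _ hq2 s (hIcc hs)
        have hF0 : F 0 = h • v := by simp [hF, hψ0]
        have hFcont : Continuous F :=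
          continuous_iff_continuousAt.2 fun s => (hFd s).continuousAt
        -- Gronwall
        have hgron : ∀ s ∈ Icc (0:ℝ) t, ‖F s‖ ≤ h * C₁ := by
          have hgb := norm_le_gronwallBound_of_norm_deriv_right_le (f := F) (f' := F')
            (δ := h * ‖v‖) (K := Lc) (ε := 0) (a := 0) (b := t)
            hFcont.continuousOn
            (fun s _ => (hFd s).hasDerivWithinAt)
            (by rw [hF0, norm_smul, Real.norm_of_nonneg hh0.le])
            (fun s hs => by
              rw [add_zero]
              exact hLip _ (hin2 s (Ico_subset_Icc_self hs)) _ (hin1 s (Ico_subset_Icc_self hs)))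
          intro s hs
          calc ‖F s‖ ≤ gronwallBound (h * ‖v‖) Lc 0 (s - 0) := hgb s hs
            _ = h * ‖v‖ * Real.exp (Lc * (s - 0)) := gronwallBound_ε0 _ _ _
            _ ≤ h * ‖v‖ * Real.exp 1 := by
                apply mul_le_mul_of_nonneg_left (Real.exp_le_exp.2 ?_) (by positivity)
                rw [sub_zero]
                nlinarith [hs.1, hs.2, ht.2, hLc0.le, hLT]
            _ = h * C₁ := by rw [hC₁]; ring
        -- Step 2 : F s stays close to h • v
        have hstep2 : ∀ s ∈ Icc (0:ℝ) t, ‖F s - h • v‖ ≤ Lc * (C₁ * h) * t := by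
          intro s hs
          have hbd : ∀ σ ∈ Icc (0:ℝ) t, ‖F' σ‖ ≤ Lc * (C₁ * h) := by
            intro σ hσ
            calc ‖F' σ‖ ≤ Lc * ‖F σ‖ := hLip _ (hin2 σ hσ) _ (hin1 σ hσ)
              _ ≤ Lc * (C₁ * h) := by nlinarith [hgron σ hσ, hLc0.le]
          have hmv := Convex.norm_image_sub_le_of_norm_hasDerivWithin_le
            (f := F) (f' := F') (s := Icc (0:ℝ) t)
            (fun σ _ => (hFd σ).hasDerivWithinAt) hbd (convex_Icc _ _)
            (left_mem_Icc.2 (le_trans hs.1 hs.2)) hs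
          rw [hF0] at hmv
          calc ‖F s - h • v‖ ≤ Lc * (C₁ * h) * ‖s - 0‖ := hmv
            _ ≤ Lc * (C₁ * h) * t := by
                rw [sub_zero, Real.norm_of_nonneg hs.1]
                exact mul_le_mul_of_nonneg_left hs.2 (by positivity)
        -- Step 3 : comparison with the linearization
        set D : ℝ → (Fin m → ℝ) := fun s => F s - h • v - (s * h) • (A v) with hD
        have hDd : ∀ s, HasDerivAt D (F' s - h • (A v)) s := by
          intro s
          have h1 : HasDerivAt (fun s : ℝ => (s * h) • (A v)) (h • (A v)) s := by
            simpa using ((hasDerivAt_id s).mul_const h).smul_const (A v)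
          exact ((hFd s).sub_const _).sub h1
        have hDbound : ∀ s ∈ Icc (0:ℝ) t, ‖F' s - h • (A v)‖ ≤ h * B t := by
          intro s hs
          have e1 : ‖F' s - A (F s)‖ ≤ ε₁ * ‖F s‖ := hTay _ (hin2 s hs) _ (hin1 s hs)
          have e2 : ‖A (F s - h • v)‖ ≤ ‖A‖ * ‖F s - h • v‖ := A.le_opNorm _
          have hsplit : F' s - h • (A v) = (F' s - A (F s)) + A (F s - h • v) := by
            rw [A.map_sub (F s) (h • v), A.map_smul h v]
            abel
          calc ‖F' s - h • (A v)‖ = ‖(F' s - A (F s)) + A (F s - h • v)‖ := by rw [hsplit]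
            _ ≤ ‖F' s - A (F s)‖ + ‖A (F s - h • v)‖ := norm_add_le _ _
            _ ≤ ε₁ * ‖F s‖ + ‖A‖ * ‖F s - h • v‖ := add_le_add e1 e2
            _ ≤ ε₁ * (h * C₁) + ‖A‖ * (Lc * (C₁ * h) * t) := by
                have := hgron s hs
                have := hstep2 s hs
                have := norm_nonneg (F s - h • v)
                nlinarith [hε₁.le, norm_nonneg A]
            _ = h * B t := by rw [hB]; ring
        have hmv3 := Convex.norm_image_sub_le_of_norm_hasDerivWithin_le
          (f := D) (f' := fun s => F' s - h • (A v)) (s := Icc (0:ℝ) t)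
          (fun σ _ => (hDd σ).hasDerivWithinAt) hDbound (convex_Icc _ _)
          (left_mem_Icc.2 ht.1.le) (right_mem_Icc.2 ht.1.le)
        have hD0 : D 0 = 0 := by simp [hD, hF0]
        have hDt : ‖F t - h • v - (t * h) • (A v)‖ ≤ h * B t * t := by
          have : ‖D t - D 0‖ ≤ h * B t * ‖t - 0‖ := hmv3
          rw [hD0, sub_zero, sub_zero, Real.norm_of_nonneg ht.1.le] at this
          exact this
        -- divide by h
        have hid : h⁻¹ • (F t - h • v - (t * h) • (A v))
            = h⁻¹ • F t - v - t • (A v) := by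
          rw [smul_sub, smul_sub, smul_smul, smul_smul]
          congr 2
          · rw [inv_mul_cancel₀ hh0.ne', one_smul]
          · rw [show h⁻¹ * (t * h) = t by field_simp]
        calc ‖h⁻¹ • (ψ t (q + h • v) - ψ t q) - v - t • (A v)‖
            = ‖h⁻¹ • (F t - h • v - (t * h) • (A v))‖ := by rw [hid]
          _ = |h⁻¹| * ‖F t - h • v - (t * h) • (A v)‖ := by
              rw [norm_smul, Real.norm_eq_abs]
          _ ≤ h⁻¹ * (h * B t * t) := by
              rw [abs_of_pos (inv_pos.2 hh0)]
              apply mul_le_mul_of_nonneg_left hDt (inv_pos.2 hh0).le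
          _ = t * B t := by field_simp
      -- take the limit h → 0⁺
      have hline : HasDerivAt (fun h : ℝ => q + h • v) v 0 := by
        simpa using ((hasDerivAt_id (0:ℝ)).smul_const v).const_add q
      have hfd : HasFDerivAt (ψ t) (fderiv ℝ (ψ t) q) (q + (0:ℝ) • v) := by
        simpa using ((hψd t) q).hasFDerivAt
      have hcomp : HasDerivAt (fun h : ℝ => ψ t (q + h • v)) (g t) 0 :=
        hfd.comp_hasDerivAt 0 hline
      have hslope : Tendsto (fun h : ℝ => h⁻¹ • (ψ t (q + h • v) - ψ t q)) (𝓝[>] (0:ℝ))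
          (𝓝 (g t)) := by
        have h1 := hasDerivAt_iff_tendsto_slope.1 hcomp
        have h2 : 𝓝[>] (0:ℝ) ≤ 𝓝[≠] (0:ℝ) :=
          nhdsWithin_mono 0 fun x hx => ne_of_gt hx
        refine (h1.mono_left h2).congr' ?_
        filter_upwards [self_mem_nhdsWithin] with x hx
        rw [slope_def_module]
        simp
      have hlim : Tendsto (fun h : ℝ => ‖h⁻¹ • (ψ t (q + h • v) - ψ t q) - v - t • (A v)‖)
          (𝓝[>] (0:ℝ)) (𝓝 ‖g t - v - t • (A v)‖) :=
        ((hslope.sub_const v).sub_const (t • (A v))).norm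
      refine le_of_tendsto hlim ?_
      filter_upwards [Ioc_mem_nhdsGT_of_mem (left_mem_Ico.2 hh₀0)] with h hh
      exact EST h hh
    -- conclude the metric bound
    set t₁ : ℝ := (ε / 2) / (‖A‖ * (Lc * C₁) + 1) with ht₁
    have ht₁0 : 0 < t₁ := by positivity
    filter_upwards [Ioo_mem_nhdsGT_of_mem (left_mem_Ico.2 (lt_min hT0 ht₁0))] with t htm
    have ht : t ∈ Ioc (0:ℝ) T := ⟨htm.1, le_of_lt (lt_of_lt_of_le htm.2 (min_le_left _ _))⟩
    have ht' : t < t₁ := lt_of_lt_of_le htm.2 (min_le_right _ _)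
    have hmain := MAIN t ht
    have hid2 : t⁻¹ • (g t - v) - A v = t⁻¹ • (g t - v - t • (A v)) := by
      rw [smul_sub t⁻¹ (g t - v) (t • (A v)), smul_smul, inv_mul_cancel₀ ht.1.ne', one_smul]
    rw [dist_eq_norm, hid2, norm_smul, Real.norm_eq_abs, abs_of_pos (inv_pos.2 ht.1)]
    have hBt : t⁻¹ * ‖g t - v - t • (A v)‖ ≤ B t := by
      calc t⁻¹ * ‖g t - v - t • (A v)‖ ≤ t⁻¹ * (t * B t) := by
            apply mul_le_mul_of_nonneg_left hmain (inv_pos.2 ht.1).le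
        _ = B t := by rw [← mul_assoc, inv_mul_cancel₀ ht.1.ne', one_mul]
    have hB1 : ε₁ * C₁ ≤ ε / 2 := by
      have h1 : ε₁ ≤ ε / (2 * Real.exp 1 * (‖v‖ + 1)) := min_le_right _ _
      have h2 : ε₁ * C₁ ≤ (ε / (2 * Real.exp 1 * (‖v‖ + 1))) * (‖v‖ * Real.exp 1) := by
        apply mul_le_mul h1 le_rfl hC₁0 (by positivity)
      calc ε₁ * C₁ ≤ (ε / (2 * Real.exp 1 * (‖v‖ + 1))) * (‖v‖ * Real.exp 1) := h2
        _ = (ε / 2) * (‖v‖ / (‖v‖ + 1)) := by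
            field_simp [Real.exp_ne_zero]
        _ ≤ (ε / 2) * 1 := by
            apply mul_le_mul_of_nonneg_left _ (by positivity)
            rw [div_le_one (by positivity)]
            linarith [norm_nonneg v]
        _ = ε / 2 := mul_one _
    have hB2 : ‖A‖ * (Lc * C₁) * t < ε / 2 := by
      have h1 : t * (‖A‖ * (Lc * C₁) + 1) < ε / 2 := by
        rw [ht₁] at ht'
        exact (lt_div_iff₀ (by positivity : (0:ℝ) < ‖A‖ * (Lc * C₁) + 1)).1 ht' 
      calc ‖A‖ * (Lc * C₁) * t = t * (‖A‖ * (Lc * C₁)) := by ring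
        _ ≤ t * (‖A‖ * (Lc * C₁) + 1) :=
            mul_le_mul_of_nonneg_left (by linarith) ht.1.le
        _ < ε / 2 := h1
    calc t⁻¹ * ‖g t - v - t • (A v)‖ ≤ B t := hBt
      _ < ε := by
          simp only [hB]
          exact (add_lt_add_of_le_of_lt hB1 hB2).trans_le (by linarith)
  -- uniqueness of limits
  have hslopeg : Tendsto (fun t : ℝ => t⁻¹ • (g t - v)) (𝓝[>] (0:ℝ)) (𝓝 w) := by
    have h1 := hasDerivAt_iff_tendsto_slope.1 hg
    have h2 : 𝓝[>] (0:ℝ) ≤ 𝓝[≠] (0:ℝ) := nhdsWithin_mono 0 fun x hx => ne_of_gt hx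
    refine (h1.mono_left h2).congr' ?_
    filter_upwards [self_mem_nhdsWithin] with x hx
    rw [slope_def_module, sub_zero, hg0]
  exact tendsto_nhds_unique hslopeg main


/-- Let `Ψ : G × E → E` be a bundle action over an action `φ` on `Q`,
and let `Φ` be its canonical lift to `π*T*Q`,
`Φ_g(q,u,p) = (Ψ_g(q,u), T^*_{φ_g(q)}φ_g^{-1}(p))`.  If every `Φ_g` is a symmetry of
the presymplectic system `(π*T*Q, ω, H)` (in particular `Φ_g^*H = H`), then every
fundamental vector field `ξ̃ ∈ 𝔛(E)` of the action `Ψ` is an infinitesimal symmetry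
of the optimal control problem `(E, π, Q, X, L)`: `L_{ξ̃}L = 0` and `L_{ξ̃}X = 0`
(the latter, by the formula for the Lie derivative of a vector field along `π`,
reading `DX·ξ̃ − Dξ₀·X = 0`, where `ξ₀ = π_*ξ̃`). -/
theorem stmt_3 (m k : ℕ) {G : Type*} [Group G] [TopologicalSpace G] [ConnectedSpace G]
    -- data of the optimal control problem
    (X : CtrlE m k → (Fin m → ℝ)) (hX : ContDiff ℝ (⊤ : ℕ∞) X)
    (L : CtrlE m k → ℝ) (hL : ContDiff ℝ (⊤ : ℕ∞) L)
    -- the bundle action `Ψ` of `G` on `E` over the action `φ` on `Q`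
    (Ψ : G → CtrlE m k → CtrlE m k) (φ : G → (Fin m → ℝ) → (Fin m → ℝ))
    (hΨsm : ∀ g, ContDiff ℝ (⊤ : ℕ∞) (Ψ g)) (hφsm : ∀ g, ContDiff ℝ (⊤ : ℕ∞) (φ g))
    (hΨ1 : Ψ 1 = id) (hΨmul : ∀ g g', Ψ (g * g') = Ψ g ∘ Ψ g')
    (hφ1 : φ 1 = id) (hφmul : ∀ g g', φ (g * g') = φ g ∘ φ g')
    (hbundle : ∀ g e, (Ψ g e).1 = φ g e.1)
    -- the canonical lift `Φ` of `Ψ` to `M = π*T*Q`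
    (Φ : G → CtrlM m k → CtrlM m k)
    (hΦsm : ∀ g, ContDiff ℝ (⊤ : ℕ∞) (Φ g))
    (hΦ1 : ∀ g e p, (Φ g (e, p)).1 = Ψ g e)
    (hΦ2 : ∀ g e p, ∀ w : Fin m → ℝ,
      (∑ i, (Φ g (e, p)).2 i * w i)
        = ∑ i, p i * fderiv ℝ (φ g⁻¹) (φ g e.1) w i)
    -- every `Φ_g` is a symmetry of the presymplectic system `(M, ω, H)`
    (hΦω : ∀ g (x v w : CtrlM m k),
      ctrlOmega m k (fderiv ℝ (Φ g) x v) (fderiv ℝ (Φ g) x w) = ctrlOmega m k v w)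
    (hΦH : ∀ g x, ctrlHam m k X L (Φ g x) = ctrlHam m k X L x)
    -- a one-parameter subgroup of `G`, its fundamental vector field `ξ̃` on `E`
    -- and the projected vector field `ξ₀ = π_*ξ̃` on `Q`
    (c : ℝ → G) (hc0 : c 0 = 1) (hcadd : ∀ s t, c (s + t) = c s * c t)
    (ξt : CtrlE m k → CtrlE m k)
    (hfund : ∀ e, HasDerivAt (fun t => Ψ (c t) e) (ξt e) 0)
    (ξ0 : (Fin m → ℝ) → (Fin m → ℝ)) (hξ0sm : ContDiff ℝ (⊤ : ℕ∞) ξ0)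
    (hfund0 : ∀ q, HasDerivAt (fun t => φ (c t) q) (ξ0 q) 0) :
    -- `ξ̃` is an infinitesimal symmetry of the optimal control problem:
    -- `L_{ξ̃} L = 0` and `L_{ξ̃} X = 0`
    (∀ e, fderiv ℝ L e (ξt e) = 0)
    ∧ (∀ e, fderiv ℝ X e (ξt e) = fderiv ℝ ξ0 e.1 (X e)) := by
    classical
  have hΨc0 : ∀ e, Ψ (c 0) e = e := by intro e; rw [hc0, hΨ1]; rfl
  have hφc0 : φ (c 0) = id := by rw [hc0, hφ1]
  have hφdiff : ∀ g, Differentiable ℝ (φ g) := fun g => (hφsm g).differentiable (by simp)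
  -- `L` is invariant
  have hLinv : ∀ g e, L (Ψ g e) = L e := by
    intro g e
    have hp0 : (Φ g (e, 0)).2 = 0 := by
      funext j
      have h := hΦ2 g e 0 (Pi.single j 1)
      simpa [Pi.single_apply] using h
    have hH := hΦH g (e, 0)
    simp only [ctrlHam, hΦ1 g e 0, hp0] at hH
    simpa using hH
  -- part 1
  have part1 : ∀ e, fderiv ℝ L e (ξt e) = 0 := by
    intro e
    have hd1 : HasDerivAt (fun t => L (Ψ (c t) e)) (fderiv ℝ L e (ξt e)) 0 := by
      have hfd : HasFDerivAt L (fderiv ℝ L e) (Ψ (c 0) e) := by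
        rw [hΨc0]; exact (hL.differentiable (by simp) e).hasFDerivAt
      exact hfd.comp_hasDerivAt 0 (hfund e)
    have hd2 : HasDerivAt (fun t => L (Ψ (c t) e)) 0 0 := by
      have heq : (fun t => L (Ψ (c t) e)) = fun _ => L e := funext fun t => hLinv (c t) e
      rw [heq]; exact hasDerivAt_const 0 _
    exact hd1.unique hd2
  -- equivariance of `X`, inverse form
  have hXinv : ∀ g e, fderiv ℝ (φ g⁻¹) (φ g e.1) (X (Ψ g e)) = X e := by
    intro g e
    have key : ∀ p : Fin m → ℝ,
        ∑ i, p i * fderiv ℝ (φ g⁻¹) (φ g e.1) (X (Ψ g e)) i = ∑ i, p i * X e i := by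
      intro p
      have hH := hΦH g (e, p)
      simp only [ctrlHam, hΦ1 g e p, hLinv g e] at hH
      have h2 := hΦ2 g e p (X (Ψ g e))
      linarith [hH, h2]
    funext j
    have h := key (Pi.single j 1)
    simpa [Pi.single_apply] using h
  -- chain rule : `Dφ_g` and `Dφ_{g⁻¹}` are mutually inverse
  have hinvcomp : ∀ g (x u : Fin m → ℝ),
      fderiv ℝ (φ g) (φ g⁻¹ x) (fderiv ℝ (φ g⁻¹) x u) = u := by
    intro g x u
    have hcomp : φ g ∘ φ g⁻¹ = id := by rw [← hφmul, mul_inv_cancel, hφ1]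
    have hfd := fderiv_comp x ((hφdiff g) (φ g⁻¹ x)) ((hφdiff g⁻¹) x)
    rw [hcomp, fderiv_id] at hfd
    have := congrArg (fun (T : (Fin m → ℝ) →L[ℝ] (Fin m → ℝ)) => T u) hfd
    simpa using this.symm
  -- forward form of equivariance
  have hXfwd : ∀ g e, X (Ψ g e) = fderiv ℝ (φ g) e.1 (X e) := by
    intro g e
    have h2 : φ g⁻¹ (φ g e.1) = e.1 := by
      have : φ g⁻¹ ∘ φ g = id := by rw [← hφmul, inv_mul_cancel, hφ1]
      exact congrFun this e.1
    calc X (Ψ g e)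
        = fderiv ℝ (φ g) (φ g⁻¹ (φ g e.1)) (fderiv ℝ (φ g⁻¹) (φ g e.1) (X (Ψ g e))) :=
          (hinvcomp g (φ g e.1) _).symm
      _ = fderiv ℝ (φ g) e.1 (X e) := by rw [h2, hXinv g e]
  -- part 2, via the key variational lemma
  refine ⟨part1, fun e => ?_⟩
  have hψ0 : φ (c 0) = id := hφc0
  have hode : ∀ q' s, HasDerivAt (fun t => φ (c t) q') (ξ0 (φ (c s) q')) s := by
    intro q' s
    have base : HasDerivAt (fun t => φ (c t) (φ (c s) q')) (ξ0 (φ (c s) q')) 0 :=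
      hfund0 (φ (c s) q')
    have base' : HasDerivAt (fun t => φ (c t) (φ (c s) q')) (ξ0 (φ (c s) q')) (s - s) := by
      rw [sub_self]; exact base
    have shifted := base'.comp_sub_const s s
    have heq : (fun t => φ (c (t - s)) (φ (c s) q')) = fun t => φ (c t) q' := by
      funext t
      have h1 : φ (c (t - s)) (φ (c s) q') = (φ (c (t - s)) ∘ φ (c s)) q' := rfl
      rw [h1, ← hφmul, ← hcadd, sub_add_cancel]
    rw [heq] at shifted
    exact shifted
  have hXcurve : HasDerivAt (fun t => X (Ψ (c t) e)) (fderiv ℝ X e (ξt e)) 0 := by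
    have hfdX : HasFDerivAt X (fderiv ℝ X e) (Ψ (c 0) e) := by
      rw [hΨc0]; exact (hX.differentiable (by simp) e).hasFDerivAt
    exact hfdX.comp_hasDerivAt 0 (hfund e)
  have heq : (fun t => X (Ψ (c t) e)) = fun t => fderiv ℝ (φ (c t)) e.1 (X e) :=
    funext fun t => hXfwd (c t) e
  rw [heq] at hXcurve
  exact key_var ξ0 hξ0sm (fun s => φ (c s)) hψ0 (fun t => hφdiff (c t)) hode
    e.1 (X e) (fderiv ℝ X e (ξt e)) hXcurve
end

section
/- Let (M₁, ω₁, h₁) be the compatible symplectic Hamiltonian system of a regular optimal control problem, let Φ₁ be a Poissonian, free and proper symplectic action of a connected Lie group G on (M₁, ω₁) preserving h₁, with momentum map 𝒥, and let μ ∈ 𝔤* be a weakly regular value of 𝒥, with embedding j_μ: 𝒥^{-1}(μ) ↪ M₁, ω_μ = j_μ^*ω₁ and h_μ = j_μ^*h₁. Then the Hamiltonian vector field Γ₁ of h₁ is tangent to 𝒥^{-1}(μ), and (𝒥^{-1}(μ), ω_μ, h_μ) is a compatible presymplectic Hamiltonian system: if Γ_μ ∈ 𝔛(𝒥^{-1}(μ))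 satisfies j_{μ*}Γ_μ = Γ₁|_{𝒥^{-1}(μ)}, then i_{Γ_μ}ω_μ − dh_μ = 0, and the set of all solutions of this equation is Γ_μ + ker ω_μ. -/
/-- Let `(M₁, ω₁, h₁)` be the compatible symplectic Hamiltonian system
of a regular optimal control problem (presented in a global chart `M₁ = ℝ^N`), let a
connected Lie group `G` act symplectically on `(M₁, ω₁)` preserving `h₁`, with
(Poissonian) momentum map `𝒥 : M₁ → 𝔤* ≅ ℝ^d` whose components are Hamiltonian
functions of the fundamental vector fields `ξ_i` (`i_{ξ_i} ω₁ = d𝒥_i`), and let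
`μ ∈ 𝔤*` be a weakly regular value, so that the tangent space of `𝒥⁻¹(μ)` at
`x ∈ 𝒥⁻¹(μ)` is `ker T_x𝒥`.  Then the Hamiltonian vector field `Γ₁` of `h₁` is
tangent to `𝒥⁻¹(μ)`, and `(𝒥⁻¹(μ), ω_μ = j_μ^*ω₁, h_μ = j_μ^*h₁)` is a compatible
presymplectic Hamiltonian system: the restriction `Γ_μ` of `Γ₁` solves
`i_{Γ_μ} ω_μ − dh_μ = 0`, and the set of all solutions of this equation is
`Γ_μ + ker ω_μ`. -/
theorem stmt_4 (N d : ℕ)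
    -- the symplectic form `ω₁` on `M₁`
    (ω₁ : (Fin N → ℝ) → (Fin N → ℝ) →ₗ[ℝ] (Fin N → ℝ) →ₗ[ℝ] ℝ)
    (hωsm : ∀ v w, ContDiff ℝ (⊤ : ℕ∞) fun x => ω₁ x v w)
    (hωalt : ∀ x v, ω₁ x v v = 0)
    (hωnondeg : ∀ x v, (∀ w, ω₁ x v w = 0) → v = 0)
    (hωclosed : ∀ x a b c,
      fderiv ℝ (fun y => ω₁ y b c) x a - fderiv ℝ (fun y => ω₁ y a c) x b
        + fderiv ℝ (fun y => ω₁ y a b) x c = 0)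
    -- the Hamiltonian `h₁` and its Hamiltonian vector field `Γ₁`
    (h₁ : (Fin N → ℝ) → ℝ) (hh₁ : ContDiff ℝ (⊤ : ℕ∞) h₁)
    (Γ₁ : (Fin N → ℝ) → (Fin N → ℝ))
    (hΓ₁ : ∀ x w, ω₁ x (Γ₁ x) w = fderiv ℝ h₁ x w)
    -- fundamental vector fields of the action and the momentum map `𝒥`
    (ξ : Fin d → (Fin N → ℝ) → (Fin N → ℝ)) (hξsm : ∀ i, ContDiff ℝ (⊤ : ℕ∞) (ξ i))
    (𝒥 : (Fin N → ℝ) → (Fin d → ℝ)) (h𝒥 : ContDiff ℝ (⊤ : ℕ∞) 𝒥)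
    (hmom : ∀ i x w, ω₁ x (ξ i x) w = fderiv ℝ (fun y => 𝒥 y i) x w)
    -- `h₁` is `G`-invariant
    (hinv : ∀ i x, fderiv ℝ h₁ x (ξ i x) = 0)
    -- the weakly regular value `μ`
    (μ : Fin d → ℝ) :
    ∀ x, 𝒥 x = μ →
      -- `Γ₁` is tangent to `𝒥⁻¹(μ)`
      (fderiv ℝ 𝒥 x (Γ₁ x) = 0)
      -- the dynamical equation `i_{Γ_μ} ω_μ − dh_μ = 0` holds (compatibility)
      ∧ (∀ w, fderiv ℝ 𝒥 x w = 0 → ω₁ x (Γ₁ x) w = fderiv ℝ h₁ x w)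
      -- the solutions of `i_Γ ω_μ = dh_μ` are exactly `Γ_μ + ker ω_μ`
      ∧ (∀ v, fderiv ℝ 𝒥 x v = 0 →
          ((∀ w, fderiv ℝ 𝒥 x w = 0 → ω₁ x v w = fderiv ℝ h₁ x w)
            ↔ ∃ z, fderiv ℝ 𝒥 x z = 0
                ∧ (∀ w, fderiv ℝ 𝒥 x w = 0 → ω₁ x z w = 0)
                ∧ v = Γ₁ x + z)) := by

  intro x hx
  have hdiff : DifferentiableAt ℝ 𝒥 x := (h𝒥.differentiable (by simp)) x
  have hcomp : ∀ i (w : Fin N → ℝ),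
      fderiv ℝ (fun y => 𝒥 y i) x w = fderiv ℝ 𝒥 x w i := by
    intro i w
    have h1 : fderiv ℝ (fun y => 𝒥 y i) x
        = (ContinuousLinearMap.proj i : ((Fin d → ℝ) →L[ℝ] ℝ)).comp (fderiv ℝ 𝒥 x) := by
      have := ((ContinuousLinearMap.proj i : ((Fin d → ℝ) →L[ℝ] ℝ)).hasFDerivAt.comp x
        hdiff.hasFDerivAt).fderiv
      exact this
    rw [h1]; rfl
  have skew : ∀ (v w : Fin N → ℝ), ω₁ x v w = - ω₁ x w v := by
    intro v w
    have h0 := hωalt x (v + w)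
    simp only [map_add, LinearMap.add_apply, hωalt x v, hωalt x w] at h0
    linarith
  -- tangency
  have htan : fderiv ℝ 𝒥 x (Γ₁ x) = 0 := by
    funext i
    have h2 : ω₁ x (ξ i x) (Γ₁ x) = fderiv ℝ 𝒥 x (Γ₁ x) i := by
      rw [hmom i x (Γ₁ x), hcomp]
    have h3 : ω₁ x (ξ i x) (Γ₁ x) = - fderiv ℝ h₁ x (ξ i x) := by
      rw [skew, hΓ₁]
    have : fderiv ℝ 𝒥 x (Γ₁ x) i = 0 := by rw [← h2, h3, hinv]; ring
    simpa using this
  refine ⟨htan, fun w _ => hΓ₁ x w, ?_⟩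
  intro v hv
  constructor
  · intro hsol
    refine ⟨v - Γ₁ x, ?_, ?_, by ring⟩
    · rw [map_sub, hv, htan, sub_zero]
    · intro w hw
      rw [map_sub, LinearMap.sub_apply, hsol w hw, hΓ₁ x w, sub_self]
  · rintro ⟨z, hz, hzker, rfl⟩
    intro w hw
    rw [map_add, LinearMap.add_apply, hΓ₁ x w, hzker w hw, add_zero]
end

section
/- For the presymplectic dynamical system (M, ω, H) of an optimal control problem with M = π*T*Q, the first constraint submanifold M₁ = {x ∈ M : (L_Z H)(x) = 0 for all Z ∈ ker ω} is locally defined by the constraints χ_a = ∂H/∂u^a = 0, and the following are equivalent: (i) M₁ is a submanifold transverse to ker ω (i.e. ker ω ∩ 𝔛(M₁)_tangent = {0}); (ii) the matrix W_{ab} = ∂χ_a/∂u^b = ∂²H/∂u^a∂u^b is non-singular on M₁. In that case (M₁, j₁^*ω) is a symplectic manifold, there is a unique vector field Γ defined at the points of M₁ satisfying i_Γω = dH there, and Γ is tangent to M₁. -/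
/-- The phase space `M = π*T*Q` of an optimal control problem, in local coordinates
`(q, p, u) ∈ ℝ^m × ℝ^m × ℝ^k`. -/
abbrev OCSpace (m k : ℕ) := (Fin m → ℝ) × (Fin m → ℝ) × (Fin k → ℝ)

/-- The presymplectic form `ω = dq^i ∧ dp_i` (whose kernel is spanned by the `∂/∂u^a`). -/
noncomputable def ocOmega (m k : ℕ) (v w : OCSpace m k) : ℝ :=
  ∑ i, (v.1 i * w.2.1 i - w.1 i * v.2.1 i)

/-- The first-order constraints `χ_a = ∂H/∂u^a`. -/
noncomputable def ocChi (m k : ℕ) (H : OCSpace m k → ℝ) (x : OCSpace m k) :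
    Fin k → ℝ :=
  fun a => fderiv ℝ H x (0, 0, Pi.single a 1)

/-- The matrix `W_{ab} = ∂χ_a/∂u^b = ∂²H/∂u^a∂u^b`. -/
noncomputable def ocW (m k : ℕ) (H : OCSpace m k → ℝ) (x : OCSpace m k) :
    Matrix (Fin k) (Fin k) ℝ :=
  Matrix.of fun a b =>
    fderiv ℝ (fun y => fderiv ℝ H y (0, 0, Pi.single a 1)) x (0, 0, Pi.single b 1)

namespace OCAux
variable {m k : ℕ} {H : OCSpace m k → ℝ}

/-- Basis vectors in the `q` directions. -/
abbrev eQ (i : Fin m) : OCSpace m k := (Pi.single i 1, 0, 0)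
/-- Basis vectors in the `p` directions. -/
abbrev eP (i : Fin m) : OCSpace m k := (0, Pi.single i 1, 0)
/-- Basis vectors in the `u` directions. -/
abbrev eU (a : Fin k) : OCSpace m k := (0, 0, Pi.single a 1)

lemma sum_eU (c : Fin k → ℝ) : ((0, 0, c) : OCSpace m k) = ∑ a, c a • eU a := by
  refine Prod.ext ?_ (Prod.ext ?_ ?_)
  · rw [Prod.fst_sum]; simp [eU]
  · rw [Prod.snd_sum, Prod.fst_sum]; simp [eU]
  · rw [Prod.snd_sum, Prod.snd_sum]
    simp only [eU, Prod.smul_mk, Prod.snd]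
    funext j
    simp [Finset.sum_apply, Pi.single_apply, mul_ite]

lemma sum_repr (w : OCSpace m k) :
    w = (∑ i, w.1 i • eQ i) + (∑ i, w.2.1 i • eP i) + (∑ a, w.2.2 a • eU a) := by
  refine Prod.ext ?_ (Prod.ext ?_ ?_)
  · simp only [Prod.fst_add, Prod.fst_sum]
    simp only [eQ, eP, eU, Prod.smul_mk, Prod.fst]
    funext j
    simp [Finset.sum_apply, Pi.single_apply, mul_ite]
  · simp only [Prod.snd_add, Prod.fst_add, Prod.snd_sum, Prod.fst_sum]
    simp only [eQ, eP, eU, Prod.smul_mk, Prod.snd, Prod.fst]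
    funext j
    simp [Finset.sum_apply, Pi.single_apply, mul_ite]
  · simp only [Prod.snd_add, Prod.snd_sum]
    simp only [eQ, eP, eU, Prod.smul_mk, Prod.snd]
    funext j
    simp [Finset.sum_apply, Pi.single_apply, mul_ite]

lemma fderiv_diff (hH : ContDiff ℝ (⊤ : ℕ∞) H) : Differentiable ℝ (fderiv ℝ H) :=
  (hH.fderiv_right (m := 1) (by exact WithTop.coe_le_coe.mpr le_top)).differentiable one_ne_zero

lemma fderiv_eval (hH : ContDiff ℝ (⊤ : ℕ∞) H) (x u v : OCSpace m k) :
    fderiv ℝ (fun y => fderiv ℝ H y u) x v = fderiv ℝ (fderiv ℝ H) x v u := by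
  rw [fderiv_clm_apply (fderiv_diff hH x) (differentiableAt_const u)]
  simp

lemma chi_fderiv (hH : ContDiff ℝ (⊤ : ℕ∞) H) (x v : OCSpace m k) :
    fderiv ℝ (ocChi m k H) x v = fun a => fderiv ℝ (fderiv ℝ H) x v (eU a) := by
  have h : ∀ a : Fin k, DifferentiableAt ℝ (fun y => fderiv ℝ H y (eU a)) x :=
    fun a => (fderiv_diff hH x).clm_apply (differentiableAt_const _)
  have h1 := fderiv_pi (𝕜 := ℝ) (φ := fun a y => fderiv ℝ H y (eU (m := m) a)) (x := x) h
  have h2 : ocChi m k H = fun x a => fderiv ℝ H x (eU a) := rfl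
  rw [h2, h1]
  funext a
  rw [ContinuousLinearMap.pi_apply, fderiv_eval hH]

lemma mulVec_eq (hH : ContDiff ℝ (⊤ : ℕ∞) H) (x : OCSpace m k) (c : Fin k → ℝ) :
    fderiv ℝ (ocChi m k H) x (0, 0, c) = (ocW m k H x).mulVec c := by
  rw [chi_fderiv hH]
  funext a
  rw [show ((0, 0, c) : OCSpace m k) = ∑ b, c b • eU b from sum_eU c, map_sum,
    ContinuousLinearMap.sum_apply]
  simp only [map_smul, ContinuousLinearMap.coe_smul', Pi.smul_apply, smul_eq_mul]
  simp only [Matrix.mulVec, dotProduct, ocW, Matrix.of_apply, fderiv_eval hH]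
  exact Finset.sum_congr rfl fun b _ => mul_comm _ _

lemma chi_fderiv_triple (hH : ContDiff ℝ (⊤ : ℕ∞) H) (x : OCSpace m k)
    (p q : Fin m → ℝ) (c : Fin k → ℝ) :
    fderiv ℝ (ocChi m k H) x (p, q, c) =
      (fun a => fderiv ℝ (fderiv ℝ H) x ((p, q, 0) : OCSpace m k) (eU a))
        + (ocW m k H x).mulVec c := by
  have hsplit : ((p, q, c) : OCSpace m k) = ((p, q, 0) : OCSpace m k) + (0, 0, c) := by
    refine Prod.ext ?_ (Prod.ext ?_ ?_) <;> simp
  rw [hsplit, map_add, mulVec_eq hH, chi_fderiv hH]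

lemma dH_apply (x : OCSpace m k) (hx : ocChi m k H x = 0)
    (w1 w2 : Fin m → ℝ) (w3 : Fin k → ℝ) :
    fderiv ℝ H x (w1, w2, w3) =
      ∑ i, w1 i * fderiv ℝ H x (eQ i) + ∑ i, w2 i * fderiv ℝ H x (eP i) := by
  have h0 : ∀ a, fderiv ℝ H x (eU (m := m) a) = 0 := fun a => by
    simpa [ocChi] using congrFun hx a
  conv_lhs => rw [sum_repr ((w1, w2, w3) : OCSpace m k)]
  rw [map_add, map_add, map_sum, map_sum, map_sum]
  simp only [map_smul, smul_eq_mul, h0, smul_zero, mul_zero, Finset.sum_const_zero, add_zero]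

lemma omega_mid (v1 v2 : Fin m → ℝ) (v3 : Fin k → ℝ) (i : Fin m)
    (c : Fin k → ℝ) :
    ocOmega m k (v1, v2, v3) (0, Pi.single i 1, c) = v1 i := by
  simp [ocOmega, Pi.single_apply, mul_ite]

lemma omega_left (v1 v2 : Fin m → ℝ) (v3 : Fin k → ℝ) (i : Fin m)
    (c : Fin k → ℝ) :
    ocOmega m k (v1, v2, v3) (Pi.single i 1, 0, c) = -v2 i := by
  simp [ocOmega, Pi.single_apply, ite_mul]

lemma completion (hH : ContDiff ℝ (⊤ : ℕ∞) H) (x : OCSpace m k)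
    (hWu : IsUnit (ocW m k H x)) (p q : Fin m → ℝ) :
    ∃ c : Fin k → ℝ, fderiv ℝ (ocChi m k H) x (p, q, c) = 0 := by
  refine ⟨-((ocW m k H x)⁻¹.mulVec
    (fun a => fderiv ℝ (fderiv ℝ H) x ((p, q, 0) : OCSpace m k) (eU a))), ?_⟩
  rw [chi_fderiv_triple hH, Matrix.mulVec_neg, Matrix.mulVec_mulVec,
    Matrix.mul_nonsing_inv _ ((Matrix.isUnit_iff_isUnit_det _).mp hWu),
    Matrix.one_mulVec]
  funext a; simp

lemma mulVec_inj (hWu : IsUnit (ocW m k H x)) :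
    Function.Injective (ocW m k H x).mulVec :=
  Matrix.mulVec_injective_iff_isUnit.mpr hWu

end OCAux

open OCAux in
/-- For the presymplectic system `(M, ω, H)` of an optimal control
problem, the first constraint submanifold `M₁ = {x : (L_Z H)(x) = 0 ∀ Z ∈ ker ω}` is
defined by the constraints `χ_a = ∂H/∂u^a = 0`; `M₁` is transverse to `ker ω` (no
nonzero vector of `ker ω` is tangent to `M₁`) iff the matrix `W_{ab} = ∂²H/∂u^a∂u^b`
is non-singular on `M₁`; and in that case `(M₁, j₁^*ω)` is symplectic and at each point
of `M₁` there is a unique vector `Γ`, tangent to `M₁`, with `i_Γ ω = dH`. -/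
theorem stmt_9 (m k : ℕ) (H : OCSpace m k → ℝ) (hH : ContDiff ℝ (⊤ : ℕ∞) H) :
    -- `M₁ = {x : L_Z H = 0 for all Z ∈ ker ω}` is defined by the constraints `χ_a = 0`
    (∀ x : OCSpace m k,
      (∀ c : Fin k → ℝ, fderiv ℝ H x (0, 0, c) = 0) ↔ ocChi m k H x = 0)
    -- (i) `M₁` transverse to `ker ω`  ↔  (ii) `det W ≠ 0` on `M₁`
    ∧ ((∀ x, ocChi m k H x = 0 →
          ∀ c : Fin k → ℝ, fderiv ℝ (ocChi m k H) x (0, 0, c) = 0 → c = 0)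
        ↔ (∀ x, ocChi m k H x = 0 → IsUnit (ocW m k H x)))
    -- in the regular case, `(M₁, j₁^*ω)` is symplectic and there is a unique solution
    -- of `i_Γ ω = dH` at each point of `M₁`, tangent to `M₁`
    ∧ ((∀ x, ocChi m k H x = 0 → IsUnit (ocW m k H x)) →
        ∀ x, ocChi m k H x = 0 →
          ((∀ v : OCSpace m k, fderiv ℝ (ocChi m k H) x v = 0 →
              (∀ w : OCSpace m k, fderiv ℝ (ocChi m k H) x w = 0 →
                ocOmega m k v w = 0) → v = 0)
          ∧ (∃! v : OCSpace m k, fderiv ℝ (ocChi m k H) x v = 0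
              ∧ ∀ w : OCSpace m k, ocOmega m k v w = fderiv ℝ H x w))) := by
  refine ⟨?_, ?_, ?_⟩
  · -- Part 1
    intro x
    constructor
    · intro h
      funext a
      exact h (Pi.single a 1)
    · intro hx c
      rw [show ((0, 0, c) : OCSpace m k) = ∑ a, c a • eU a from sum_eU c, map_sum]
      refine Finset.sum_eq_zero fun a _ => ?_
      rw [map_smul]
      have h0 : fderiv ℝ H x (eU (m := m) a) = 0 := by simpa [ocChi] using congrFun hx a
      rw [h0, smul_zero]
  · -- Part 2
    constructor
    · intro hT x hx
      rw [← Matrix.mulVec_injective_iff_isUnit]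
      intro c c' hcc
      have h : (ocW m k H x).mulVec (c - c') = 0 := by
        rw [Matrix.mulVec_sub, hcc, sub_self]
      have := hT x hx (c - c') (by rw [mulVec_eq hH, h])
      exact sub_eq_zero.mp this
    · intro hU x hx c hc
      refine mulVec_inj (hU x hx) ?_
      rw [← mulVec_eq hH, hc, Matrix.mulVec_zero]
  · -- Part 3
    intro hU x hx
    have hWu := hU x hx
    have hinj := mulVec_inj (H := H) (x := x) hWu
    constructor
    · -- nondegeneracy of the restricted form
      intro v
      obtain ⟨v1, v2, v3⟩ := v
      intro hA hperp
      have h1 : v1 = 0 := by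
        funext i
        obtain ⟨c, hc⟩ := completion hH x hWu 0 (Pi.single i 1)
        have h := hperp (0, Pi.single i 1, c) hc
        rw [omega_mid] at h
        simpa using h
      have h2 : v2 = 0 := by
        funext i
        obtain ⟨c, hc⟩ := completion hH x hWu (Pi.single i 1) 0
        have h := hperp (Pi.single i 1, 0, c) hc
        rw [omega_left] at h
        simpa using neg_eq_zero.mp h
      subst h1; subst h2
      rw [mulVec_eq hH] at hA
      have h3 : v3 = 0 := hinj (by rw [hA, Matrix.mulVec_zero])
      rw [h3]
      rfl
    · -- existence and uniqueness of Γ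
      obtain ⟨r0, hr0⟩ : ∃ r : Fin k → ℝ, r = fun a =>
          fderiv ℝ (fderiv ℝ H) x
            (((fun i => fderiv ℝ H x (eP i)), (fun i => -fderiv ℝ H x (eQ i)), 0) :
              OCSpace m k) (eU a) := ⟨_, rfl⟩
      obtain ⟨c0, hc0⟩ : ∃ c : Fin k → ℝ, c = -((ocW m k H x)⁻¹.mulVec r0) := ⟨_, rfl⟩
      have hWc0 : (ocW m k H x).mulVec c0 = -r0 := by
        rw [hc0, Matrix.mulVec_neg, Matrix.mulVec_mulVec,
          Matrix.mul_nonsing_inv _ ((Matrix.isUnit_iff_isUnit_det _).mp hWu),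
          Matrix.one_mulVec]
      refine ⟨((fun i => fderiv ℝ H x (eP i)), (fun i => -fderiv ℝ H x (eQ i)), c0),
        ⟨?_, ?_⟩, ?_⟩
      · -- Γ is tangent to M₁
        rw [chi_fderiv_triple hH, hWc0, ← hr0]
        funext a
        simp
      · -- i_Γ ω = dH on M₁
        intro w
        obtain ⟨w1, w2, w3⟩ := w
        rw [dH_apply x hx]
        simp only [ocOmega]
        rw [← Finset.sum_add_distrib]
        refine Finset.sum_congr rfl fun i _ => ?_
        simp only [mul_neg, sub_neg_eq_add]
        ring
      · -- uniqueness
        intro y hy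
        obtain ⟨y1, y2, y3⟩ := y
        obtain ⟨hyT, hyω⟩ := hy
        have hy1 : y1 = fun i => fderiv ℝ H x (eP i) := by
          funext i
          have h := hyω (eP i)
          rw [omega_mid] at h
          exact h
        have hy2 : y2 = fun i => -fderiv ℝ H x (eQ i) := by
          funext i
          have h := hyω (eQ i)
          rw [omega_left] at h
          show y2 i = -fderiv ℝ H x (eQ i)
          linarith
        subst hy1; subst hy2
        rw [chi_fderiv_triple hH, ← hr0] at hyT
        have hy3 : y3 = c0 := by
          refine hinj ?_
          rw [hWc0]
          exact eq_neg_of_add_eq_zero_right hyT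
        rw [hy3]
end

section
/- Consider smooth curves x, y, u, p, q: I → ℝ³ satisfying the Hamilton equations of the bounded-curvature shortest-path problem: ẋ = y, ẏ = y × u, ṗ = 0, q̇ = −p − u × q, together with the first-order constraint ∂H/∂u = q × y = 0 along the curve (i.e. q(t) × y(t) = 0 for all t ∈ I). Then the momentum p and the total angular momentum x × p + y × q are constant along the curve; in particular the six Noether functions f₁ = p₁, f₂ = p₂, f₃ = p₃ and the components of x × p + y × q, arising from invariance under translations and rotations, are constants of motion. -/
lemma hasDerivAt_cross {f g : ℝ → (Fin 3 → ℝ)} {f' g' : Fin 3 → ℝ} {t : ℝ}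
    (hf : HasDerivAt f f' t) (hg : HasDerivAt g g' t) :
    HasDerivAt (fun s => crossProduct (f s) (g s))
      (crossProduct f' (g t) + crossProduct (f t) g') t := by
  rw [hasDerivAt_pi]
  have hf' := hasDerivAt_pi.mp hf
  have hg' := hasDerivAt_pi.mp hg
  intro i
  fin_cases i
  · simp [crossProduct]
    convert (((hf' 1).mul (hg' 2)).sub ((hf' 2).mul (hg' 1))) using 1; rfl; ring
  · simp [crossProduct]
    convert (((hf' 2).mul (hg' 0)).sub ((hf' 0).mul (hg' 2))) using 1; rfl; ring
  · simp [crossProduct]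
    convert (((hf' 0).mul (hg' 1)).sub ((hf' 1).mul (hg' 0))) using 1; rfl; ring

lemma const_of_deriv_zero {a b : ℝ} (f : ℝ → (Fin 3 → ℝ))
    (hf : ∀ t ∈ Set.Ioo a b, HasDerivAt f 0 t) :
    ∀ s ∈ Set.Ioo a b, ∀ t ∈ Set.Ioo a b, f s = f t := by
  intro s hs t ht
  refine (convex_Ioo a b).is_const_of_fderivWithin_eq_zero
    (fun z hz => ((hf z hz).differentiableAt).differentiableWithinAt) (fun z hz => ?_) hs ht
  rw [fderivWithin_of_isOpen isOpen_Ioo hz, (hf z hz).hasFDerivAt.fderiv]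
  ext v
  simp

/-- Along any solution of the Hamilton equations of the
bounded-curvature shortest-path problem, `ẋ = y`, `ẏ = y × u`, `ṗ = 0`,
`q̇ = −p − u × q`, satisfying the first-order constraint `q × y = 0`, the momentum `p`
and the total angular momentum `x × p + y × q` are constant; in particular the six
Noether functions (the three components of `p`, arising from invariance under
translations, and the three components of `x × p + y × q`, arising from invariance
under rotations) are constants of motion. -/
theorem stmt_16 (a b : ℝ)
    (x y u p q : ℝ → (Fin 3 → ℝ))
    (hx : ∀ t ∈ Set.Ioo a b, HasDerivAt x (y t) t)
    (hy : ∀ t ∈ Set.Ioo a b, HasDerivAt y (crossProduct (y t) (u t)) t)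
    (hp : ∀ t ∈ Set.Ioo a b, HasDerivAt p 0 t)
    (hq : ∀ t ∈ Set.Ioo a b, HasDerivAt q (-(p t) - crossProduct (u t) (q t)) t)
    (hconstraint : ∀ t ∈ Set.Ioo a b, crossProduct (q t) (y t) = 0) :
    (∀ s ∈ Set.Ioo a b, ∀ t ∈ Set.Ioo a b, p s = p t)
    ∧ (∀ s ∈ Set.Ioo a b, ∀ t ∈ Set.Ioo a b,
        crossProduct (x s) (p s) + crossProduct (y s) (q s)
          = crossProduct (x t) (p t) + crossProduct (y t) (q t))
    ∧ (∀ i : Fin 3, ∀ s ∈ Set.Ioo a b, ∀ t ∈ Set.Ioo a b,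
        p s i = p t i
        ∧ (crossProduct (x s) (p s) + crossProduct (y s) (q s)) i
            = (crossProduct (x t) (p t) + crossProduct (y t) (q t)) i) := by
  have hPconst := const_of_deriv_zero p hp
  have hJ : ∀ t ∈ Set.Ioo a b,
      HasDerivAt (fun s => crossProduct (x s) (p s) + crossProduct (y s) (q s)) 0 t := by
    intro t ht
    have h := (hasDerivAt_cross (hx t ht) (hp t ht)).add
      (hasDerivAt_cross (hy t ht) (hq t ht))
    refine h.congr_deriv (Eq.symm ?_)
    have hc := hconstraint t ht
    have hc0 := congrFun hc 0
    have hc1 := congrFun hc 1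
    have hc2 := congrFun hc 2
    simp [crossProduct] at hc0 hc1 hc2
    funext i
    fin_cases i
    · simp [crossProduct, Matrix.vecHead, Matrix.vecTail]
      first
        | linear_combination u t 1 * hc2 - u t 2 * hc1
        | linear_combination u t 2 * hc1 - u t 1 * hc2
    · simp [crossProduct, Matrix.vecHead, Matrix.vecTail]
      first
        | linear_combination u t 2 * hc0 - u t 0 * hc2
        | linear_combination u t 0 * hc2 - u t 2 * hc0
    · simp [crossProduct, Matrix.vecHead, Matrix.vecTail]
      first
        | linear_combination u t 0 * hc1 - u t 1 * hc0
        | linear_combination u t 1 * hc0 - u t 0 * hc1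
  have hJconst := const_of_deriv_zero _ hJ
  exact ⟨hPconst, hJconst, fun i s hs t ht =>
    ⟨congrFun (hPconst s hs t ht) i, congrFun (hJconst s hs t ht) i⟩⟩
end

section
/- Let (M, ω, H) be the presymplectic dynamical system of an optimal control problem, and let Φ be an action of a connected Lie group G on M such that Φ_g^*ω = ω and Φ_g^*H = H for every g ∈ G (G is a symmetry group of (M, ω, H)). Then Φ leaves invariant the final constraint submanifold M_f produced by the presymplectic constraint algorithm and induces an action Φ_f on M_f, and G is a symmetry group of the associated compatible presymplectic dynamical system (M_f, ω_f, h_f), where ω_f = j_f^*ω and h_f = j_f^*H: each (Φ_f)_g preserves ω_f and h_f. -/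
/-- The set of vector fields `Γ` solving `i_Γ ω = dH` at the points of the first
constraint submanifold `M₁ = {x : (L_Z H)(x) = 0 ∀ Z ∈ ker ω}`. -/
def ocSol (m k : ℕ) (H : OCSpace m k → ℝ) : Set (OCSpace m k → OCSpace m k) :=
  {Γ | ∀ x : OCSpace m k, (∀ c : Fin k → ℝ, fderiv ℝ H x (0, 0, c) = 0) →
    ∀ w : OCSpace m k, ocOmega m k (Γ x) w = fderiv ℝ H x w}

/-- The sequence of constraint submanifolds of the presymplectic constraint
algorithm: `M₁ = {L_Z H = 0, Z ∈ ker ω}` and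
`M_{k+1} = {x ∈ M_k : every solution Γ of i_Γω = dH on M₁ is tangent to M_k at x}`. -/
def ocMseq (m k : ℕ) (H : OCSpace m k → ℝ) : ℕ → Set (OCSpace m k)
  | 0 => {x | ∀ c : Fin k → ℝ, fderiv ℝ H x (0, 0, c) = 0}
  | (n + 1) => {x ∈ ocMseq m k H n |
      ∀ Γ ∈ ocSol m k H, Γ x ∈ tangentConeAt ℝ (ocMseq m k H n) x}

/-- The final constraint submanifold `M_f = ∩_k M_k`. -/
def ocMf (m k : ℕ) (H : OCSpace m k → ℝ) : Set (OCSpace m k) :=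
  ⋂ n, ocMseq m k H n

/-- A vector killed by `ocOmega` against everything has vanishing `q` and `p` parts. -/
lemma ocOmega_ker {m k : ℕ} (v : OCSpace m k) (h : ∀ w, ocOmega m k v w = 0) :
    v.1 = 0 ∧ v.2.1 = 0 := by
  constructor
  · have h1 := h (0, v.1, 0)
    simp only [ocOmega] at h1
    have : ∑ i, v.1 i * v.1 i = 0 := by simpa using h1
    funext i
    have := (Finset.sum_eq_zero_iff_of_nonneg (fun j _ => mul_self_nonneg (v.1 j))).1 this i
      (Finset.mem_univ i)
    simpa [mul_self_eq_zero] using this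
  · have h1 := h (v.2.1, 0, 0)
    simp only [ocOmega] at h1
    have hz : ∑ i, v.2.1 i * v.2.1 i = 0 := by
      have h2 : -∑ i, v.2.1 i * v.2.1 i = 0 := by
        rw [← Finset.sum_neg_distrib]; simpa using h1
      linarith
    funext i
    have := (Finset.sum_eq_zero_iff_of_nonneg (fun j _ => mul_self_nonneg (v.2.1 j))).1 hz i
      (Finset.mem_univ i)
    simpa [mul_self_eq_zero] using this

/-- `ocOmega` vanishes on kernel vectors `(0,0,c)`. -/
lemma ocOmega_ker_vec {m k : ℕ} (c : Fin k → ℝ) (w : OCSpace m k) :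
    ocOmega m k ((0, 0, c) : OCSpace m k) w = 0 := by
  simp [ocOmega]

/-- Let `(M, ω, H)` be the presymplectic system of an optimal
control problem, and let `Φ` be an action of a connected Lie group `G` on `M` with
`Φ_g^*ω = ω` and `Φ_g^*H = H` for every `g` (a symmetry group of `(M, ω, H)`).  Then
`Φ` leaves invariant the final constraint submanifold `M_f` of the presymplectic
constraint algorithm (hence induces an action `Φ_f` on `M_f`), and `G` is a symmetry
group of the compatible presymplectic system `(M_f, ω_f = j_f^*ω, h_f = j_f^*H)`:
each `(Φ_f)_g` preserves `ω_f` and `h_f`. -/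
theorem stmt_17 (m k : ℕ) {G : Type*} [Group G] [TopologicalSpace G] [ConnectedSpace G]
    (H : OCSpace m k → ℝ) (hH : ContDiff ℝ (⊤ : ℕ∞) H)
    -- the action `Φ` of `G` on `M` by diffeomorphisms
    (Φ : G → OCSpace m k → OCSpace m k)
    (hΦsm : ∀ g, ContDiff ℝ (⊤ : ℕ∞) (Φ g))
    (hΦ1 : Φ 1 = id) (hΦmul : ∀ g g', Φ (g * g') = Φ g ∘ Φ g')
    -- `G` is a symmetry group of `(M, ω, H)`
    (hΦω : ∀ g (x v w : OCSpace m k),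
      ocOmega m k (fderiv ℝ (Φ g) x v) (fderiv ℝ (Φ g) x w) = ocOmega m k v w)
    (hΦH : ∀ g x, H (Φ g x) = H x) :
    ∀ g : G,
      -- `Φ_g` leaves `M_f` invariant, inducing an action on `M_f`
      Φ g '' ocMf m k H = ocMf m k H
      -- the induced action preserves `h_f = j_f^*H`
      ∧ (∀ x ∈ ocMf m k H, H (Φ g x) = H x)
      -- and preserves `ω_f = j_f^*ω`
      ∧ (∀ x ∈ ocMf m k H, ∀ v ∈ tangentConeAt ℝ (ocMf m k H) x,
          ∀ w ∈ tangentConeAt ℝ (ocMf m k H) x,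
            ocOmega m k (fderiv ℝ (Φ g) x v) (fderiv ℝ (Φ g) x w)
              = ocOmega m k v w) := by
  have hdiff : ∀ g : G, Differentiable ℝ (Φ g) := fun g => (hΦsm g).differentiable (by simp)
  have hHdiff : Differentiable ℝ H := hH.differentiable (by simp)
  -- inverse relation on points
  have hinv : ∀ (g : G) (x : OCSpace m k), Φ g⁻¹ (Φ g x) = x := by
    intro g x
    have : Φ g⁻¹ ∘ Φ g = id := by rw [← hΦmul]; simp [hΦ1]
    exact congrFun this x
  -- derivative inverse relation
  have hDinv : ∀ (g : G) (x : OCSpace m k) (v : OCSpace m k),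
      fderiv ℝ (Φ g⁻¹) (Φ g x) (fderiv ℝ (Φ g) x v) = v := by
    intro g x v
    have hcomp : fderiv ℝ (Φ g⁻¹ ∘ Φ g) x =
        (fderiv ℝ (Φ g⁻¹) (Φ g x)).comp (fderiv ℝ (Φ g) x) :=
      fderiv_comp x (hdiff g⁻¹ _) (hdiff g x)
    have hid : Φ g⁻¹ ∘ Φ g = id := by rw [← hΦmul]; simp [hΦ1]
    rw [hid, fderiv_id] at hcomp
    have := congrFun (congrArg (DFunLike.coe) hcomp.symm) v
    simpa using this
  -- derivative of H is Φ-invariant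
  have hDH : ∀ (g : G) (x : OCSpace m k) (v : OCSpace m k),
      fderiv ℝ H (Φ g x) (fderiv ℝ (Φ g) x v) = fderiv ℝ H x v := by
    intro g x v
    have hHc : H ∘ Φ g = H := funext fun y => hΦH g y
    have hcomp : fderiv ℝ (H ∘ Φ g) x =
        (fderiv ℝ H (Φ g x)).comp (fderiv ℝ (Φ g) x) :=
      fderiv_comp x (hHdiff _) (hdiff g x)
    rw [hHc] at hcomp
    have := congrFun (congrArg (DFunLike.coe) hcomp) v
    simpa using this.symm
  -- the base (primary constraint) set is invariant
  have hM0 : ∀ (g : G) (x : OCSpace m k),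
      (∀ c : Fin k → ℝ, fderiv ℝ H x (0, 0, c) = 0) →
      (∀ c : Fin k → ℝ, fderiv ℝ H (Φ g x) (0, 0, c) = 0) := by
    intro g x hx c
    set v : OCSpace m k := fderiv ℝ (Φ g⁻¹) (Φ g x) (0, 0, c) with hv
    -- (0,0,c) = D(Φ g) x v
    have hDv : fderiv ℝ (Φ g) x v = (0, 0, c) := by
      have := hDinv g⁻¹ (Φ g x) ((0, 0, c) : OCSpace m k)
      rw [inv_inv] at this
      rw [hv]
      rw [hinv g x] at this
      exact this
    -- v is in the kernel of ω
    have hker : ∀ w, ocOmega m k v w = 0 := by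
      intro w
      have hw : w = fderiv ℝ (Φ g⁻¹) (Φ g x) (fderiv ℝ (Φ g) x w) := (hDinv g x w).symm
      calc ocOmega m k v w
          = ocOmega m k (fderiv ℝ (Φ g⁻¹) (Φ g x) (0, 0, c))
              (fderiv ℝ (Φ g⁻¹) (Φ g x) (fderiv ℝ (Φ g) x w)) := by rw [← hw, hv]
        _ = ocOmega m k ((0, 0, c) : OCSpace m k) (fderiv ℝ (Φ g) x w) := hΦω g⁻¹ _ _ _
        _ = 0 := ocOmega_ker_vec _ _
    obtain ⟨h1, h2⟩ := ocOmega_ker v hker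
    have hveq : v = ((0 : Fin m → ℝ), (0 : Fin m → ℝ), v.2.2) := by
      ext <;> simp [h1, h2]
    calc fderiv ℝ H (Φ g x) (0, 0, c)
        = fderiv ℝ H (Φ g x) (fderiv ℝ (Φ g) x v) := by rw [hDv]
      _ = fderiv ℝ H x v := hDH g x v
      _ = fderiv ℝ H x ((0 : Fin m → ℝ), (0 : Fin m → ℝ), v.2.2) := by rw [← hveq]
      _ = 0 := hx v.2.2
  -- each constraint set is invariant (MapsTo)
  have hmaps : ∀ (n : ℕ) (g : G),
      Set.MapsTo (Φ g) (ocMseq m k H n) (ocMseq m k H n) := by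
    intro n
    induction n with
    | zero => intro g x hx; exact hM0 g x hx
    | succ n ih =>
      intro g x hx
      obtain ⟨hxn, hxt⟩ := hx
      refine ⟨ih g hxn, ?_⟩
      intro Γ hΓ
      -- pull back Γ by Φ g
      set Γ' : OCSpace m k → OCSpace m k :=
        fun y => fderiv ℝ (Φ g⁻¹) (Φ g y) (Γ (Φ g y)) with hΓ'def
      have hΓ' : Γ' ∈ ocSol m k H := by
        intro y hy w
        have hyg : ∀ c : Fin k → ℝ, fderiv ℝ H (Φ g y) (0, 0, c) = 0 := hM0 g y hy
        have hw : w = fderiv ℝ (Φ g⁻¹) (Φ g y) (fderiv ℝ (Φ g) y w) := (hDinv g y w).symm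
        calc ocOmega m k (Γ' y) w
            = ocOmega m k (fderiv ℝ (Φ g⁻¹) (Φ g y) (Γ (Φ g y)))
                (fderiv ℝ (Φ g⁻¹) (Φ g y) (fderiv ℝ (Φ g) y w)) := by rw [← hw]
          _ = ocOmega m k (Γ (Φ g y)) (fderiv ℝ (Φ g) y w) := hΦω g⁻¹ _ _ _
          _ = fderiv ℝ H (Φ g y) (fderiv ℝ (Φ g) y w) := hΓ (Φ g y) hyg _
          _ = fderiv ℝ H y w := hDH g y w
      have ht : Γ' x ∈ tangentConeAt ℝ (ocMseq m k H n) x := hxt Γ' hΓ'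
      -- push forward the tangent vector
      have hfd : HasFDerivWithinAt (Φ g) (fderiv ℝ (Φ g) x) (ocMseq m k H n) x :=
        ((hdiff g x).hasFDerivAt).hasFDerivWithinAt
      have := hfd.mapsTo_tangent_cone ht
      have hΓx : fderiv ℝ (Φ g) x (Γ' x) = Γ (Φ g x) := by
        show fderiv ℝ (Φ g) x (fderiv ℝ (Φ g⁻¹) (Φ g x) (Γ (Φ g x))) = Γ (Φ g x)
        have h := hDinv g⁻¹ (Φ g x) (Γ (Φ g x))
        rw [inv_inv, hinv g x] at h
        exact h
      rw [hΓx] at this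
      exact tangentConeAt_mono ((ih g).image_subset) this
  -- Mf is invariant as a set
  have hMfsub : ∀ g : G, Φ g '' ocMf m k H ⊆ ocMf m k H := by
    intro g x hx
    obtain ⟨y, hy, rfl⟩ := hx
    exact Set.mem_iInter.2 fun n => hmaps n g (Set.mem_iInter.1 hy n)
  intro g
  refine ⟨?_, fun x _ => hΦH g x, fun x _ v _ w _ => hΦω g x v w⟩
  apply Set.Subset.antisymm (hMfsub g)
  intro x hx
  refine ⟨Φ g⁻¹ x, hMfsub g⁻¹ ⟨x, hx, rfl⟩, ?_⟩
  have : Φ g ∘ Φ g⁻¹ = id := by rw [← hΦmul]; simp [hΦ1]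
  exact congrFun this x
end
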